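/- arXiv:1908.00674 — 7 statements merged into one kernel-verified Lean document; each statement's English description precedes it below -/
import Mathlib

section
/- For every graph G, the b-chromatic number of G is at most m(G), where m(G) is the largest integer k such that G has at least k vertices of degree at least k-1. -/
open SimpleGraph

variable {V : Type*}

/-- A proper coloring of `G` using exactly the colors `0, …, k-1`. -/
def IsProperKColoring (G : SimpleGraph V) (k : ℕ) (c : V → ℕ) : Prop :=
  (∀ v, c v < k) ∧ (∀ u v, G.Adj u v → c u ≠ c v) ∧ ∀ i < k, ∃ v, c v = i

/-- `u` is a b-vertex: it has a neighbor in every color class other than its own. -/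
def IsBVertex (G : SimpleGraph V) (k : ℕ) (c : V → ℕ) (u : V) : Prop :=
  ∀ j < k, j ≠ c u → ∃ w, G.Adj u w ∧ c w = j

/-- A b-coloring of `G` with `k` colors: a proper coloring using exactly `k` colors
in which every color class contains a b-vertex. -/
def IsBColoring (G : SimpleGraph V) (k : ℕ) (c : V → ℕ) : Prop :=
  IsProperKColoring G k c ∧ ∀ i < k, ∃ u, c u = i ∧ IsBVertex G k c u

/-- The b-chromatic number: the largest `k` for which `G` has a b-coloring with `k` colors. -/
noncomputable def bChrom [Fintype V] (G : SimpleGraph V) : ℕ :=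
  sSup {k | ∃ c : V → ℕ, IsBColoring G k c}
/-- The upper bound `m(G)`: the largest `k` such that `G` has at least `k` vertices of
degree at least `k - 1`. -/
noncomputable def mBound [Fintype V] (G : SimpleGraph V) [DecidableRel G.Adj] : ℕ :=
  sSup {k | ∃ S : Finset V, k ≤ S.card ∧ ∀ v ∈ S, k - 1 ≤ G.degree v}

open Finset

variable {G : SimpleGraph V} {k : ℕ} {c : V → ℕ}

theorem IsBVertex.sub_one_le_degree [Fintype V] [DecidableRel G.Adj] {u : V}
    (hu : IsBVertex G k c u) : k - 1 ≤ G.degree u :=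
  calc k - 1 = (range k).card - 1 := by rw [card_range]
    _ ≤ ((range k).erase (c u)).card := pred_card_le_card_erase
    _ ≤ ((G.neighborFinset u).image c).card := card_le_card fun j hj => by
      obtain ⟨hju, hjk⟩ := mem_erase.mp hj
      obtain ⟨w, huw, rfl⟩ := hu j (mem_range.mp hjk) hju
      exact mem_image_of_mem c ((mem_neighborFinset G u w).mpr huw)
    _ ≤ (G.neighborFinset u).card := card_image_le
    _ = G.degree u := card_neighborFinset_eq_degree G u

theorem IsBColoring.exists_bVertices [Fintype V] (hc : IsBColoring G k c) :
    ∃ S : Finset V, k ≤ S.card ∧ ∀ v ∈ S, IsBVertex G k c v := by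
  classical
  refine ⟨univ.filter (IsBVertex G k c), ?_, fun v hv => (mem_filter.mp hv).2⟩
  calc k = (range k).card := (card_range k).symm
    _ ≤ ((univ.filter (IsBVertex G k c)).image c).card := card_le_card fun i hi => by
      obtain ⟨u, rfl, hu⟩ := hc.2 i (mem_range.mp hi)
      exact mem_image_of_mem c (mem_filter.mpr ⟨mem_univ u, hu⟩)
    _ ≤ (univ.filter (IsBVertex G k c)).card := card_image_le

theorem le_mBound [Fintype V] [DecidableRel G.Adj] {S : Finset V} (hkS : k ≤ S.card)
    (hS : ∀ v ∈ S, k - 1 ≤ G.degree v) : k ≤ mBound G :=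
  le_csSup ⟨Fintype.card V, fun _ ⟨T, hT, _⟩ => hT.trans T.card_le_univ⟩ ⟨S, hkS, hS⟩

/-- For every graph `G`, `b(G) ≤ m(G)`. -/
theorem bChrom_le_mBound [Fintype V] (G : SimpleGraph V) [DecidableRel G.Adj] :
    bChrom G ≤ mBound G := by
  refine csSup_le' fun k ⟨c, hc⟩ => ?_
  obtain ⟨S, hkS, hS⟩ := hc.exists_bVertices
  exact le_mBound hkS fun v hv => (hS v hv).sub_one_le_degree
end

section
/- For every n ≥ 4, the graph obtained from the complete bipartite graph K_{n,n} by deleting the edges of a perfect matching admits a b-coloring with 2 colors and with n colors, but admits no b-coloring with k colors for any integer k with 2 < k < n. -/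
open SimpleGraph

variable {V : Type*}

/-- `K_{n,n}` minus a perfect matching: `inl i` is adjacent to `inr j` iff `i ≠ j`. -/
def crown (n : ℕ) : SimpleGraph (Fin n ⊕ Fin n) :=
  SimpleGraph.fromRel (fun a b => ∃ i j : Fin n, i ≠ j ∧ a = Sum.inl i ∧ b = Sum.inr j)

/-!
Two b-vertices of different colors on the same side of the crown are adjacent to every other
color, so all `k` colors occur on the opposite side. A vertex `inl j` is adjacent to every
`inr m` with `m ≠ j`, so its color occurs on the right only at `inr j`; hence `j ↦ c (inl j)` is
injective and `n ≤ k`. Among b-vertices of three colors two share a side, which rules out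
`2 < k < n`. Coloring by side, resp. by index, gives the b-colorings with `2` and `n` colors.
-/

open Function Sum

section Transfer

variable {W : Type*} {G : SimpleGraph V} {H : SimpleGraph W} {k : ℕ} {c : W → ℕ}

lemma IsProperKColoring.comp_iso (e : G ≃g H) (hc : IsProperKColoring H k c) :
    IsProperKColoring G k (c ∘ e) := by
  obtain ⟨hlt, hadj, hsurj⟩ := hc
  refine ⟨fun v => hlt (e v), fun u v huv => hadj _ _ (e.map_adj_iff.2 huv), fun i hi => ?_⟩
  obtain ⟨w, hw⟩ := hsurj i hi
  exact ⟨e.symm w, by simpa using hw⟩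

lemma IsBVertex.comp_iso (e : G ≃g H) {u : V} (hu : IsBVertex H k c (e u)) :
    IsBVertex G k (c ∘ e) u := by
  intro j hj hne
  obtain ⟨w, hadj, hw⟩ := hu j hj hne
  exact ⟨e.symm w, e.map_adj_iff.1 (by rwa [e.apply_symm_apply]), by simpa using hw⟩

end Transfer

section Crown

variable {n k : ℕ} {i j p q : Fin n} {c : Fin n ⊕ Fin n → ℕ}

@[simp]
lemma crown_adj_inl_inr : (crown n).Adj (inl i) (inr j) ↔ i ≠ j := by
  simp [crown]

@[simp]
lemma crown_adj_inr_inl : (crown n).Adj (inr i) (inl j) ↔ i ≠ j := by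
  rw [adj_comm, crown_adj_inl_inr, ne_comm]

@[simp]
lemma crown_not_adj_inl_inl : ¬ (crown n).Adj (inl i) (inl j) := by
  simp [crown]

@[simp]
lemma crown_not_adj_inr_inr : ¬ (crown n).Adj (inr i) (inr j) := by
  simp [crown]

def crownSwap (n : ℕ) : crown n ≃g crown n where
  toEquiv := Equiv.sumComm _ _
  map_rel_iff' {u v} := by
    rcases u with i | i <;> rcases v with j | j <;> simp

lemma IsProperKColoring.eq_of_inl_eq_inr (hc : IsProperKColoring (crown n) k c)
    (h : c (inl i) = c (inr j)) : i = j := by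
  by_contra hij
  exact hc.2.1 _ _ (crown_adj_inl_inr.2 hij) h

lemma IsBVertex.exists_inr (hp : IsBVertex (crown n) k c (inl p)) {d : ℕ} (hd : d < k)
    (hne : d ≠ c (inl p)) : ∃ m, c (inr m) = d := by
  obtain ⟨w | m, hadj, hw⟩ := hp d hd hne
  · exact absurd hadj crown_not_adj_inl_inl
  · exact ⟨m, hw⟩

lemma le_of_isBVertex_inl_inl (hc : IsProperKColoring (crown n) k c)
    (hpq : c (inl p) ≠ c (inl q)) (hp : IsBVertex (crown n) k c (inl p))
    (hq : IsBVertex (crown n) k c (inl q)) : n ≤ k := by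
  have hright : ∀ d < k, ∃ m, c (inr m) = d := by
    intro d hd
    by_cases hdp : d = c (inl p)
    · exact hq.exists_inr hd (hdp ▸ hpq)
    · exact hp.exists_inr hd hdp
  have hinj : Injective fun j => (⟨c (inl j), hc.1 _⟩ : Fin k) := by
    intro i j hij
    obtain ⟨m, hm⟩ := hright _ (hc.1 (inl i))
    have hji : c (inl j) = c (inr m) := (Fin.mk.inj_iff.1 hij).symm.trans hm.symm
    rw [hc.eq_of_inl_eq_inr hm.symm, hc.eq_of_inl_eq_inr hji]
  simpa using Fintype.card_le_of_injective _ hinj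

lemma le_of_isBVertex_of_isLeft_eq {u v : Fin n ⊕ Fin n} (hc : IsProperKColoring (crown n) k c)
    (hside : u.isLeft = v.isLeft) (huv : c u ≠ c v) (hu : IsBVertex (crown n) k c u)
    (hv : IsBVertex (crown n) k c v) : n ≤ k := by
  rcases u with p | p <;> rcases v with q | q
  · exact le_of_isBVertex_inl_inl hc huv hu hv
  · simp at hside
  · simp at hside
  · exact le_of_isBVertex_inl_inl (c := c ∘ crownSwap n) (hc.comp_iso _) huv
      (IsBVertex.comp_iso (u := inl p) _ hu) (IsBVertex.comp_iso (u := inl q) _ hv)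

lemma le_of_isBColoring_crown (hk : 2 < k) (hc : IsBColoring (crown n) k c) : n ≤ k := by
  obtain ⟨u₀, hu₀, hb₀⟩ := hc.2 0 (by omega)
  obtain ⟨u₁, hu₁, hb₁⟩ := hc.2 1 (by omega)
  obtain ⟨u₂, hu₂, hb₂⟩ := hc.2 2 (by omega)
  have pigeonhole : ∀ a b d : Bool, a = b ∨ a = d ∨ b = d := by decide
  rcases pigeonhole u₀.isLeft u₁.isLeft u₂.isLeft with h | h | h
  · exact le_of_isBVertex_of_isLeft_eq hc.1 h (by omega) hb₀ hb₁
  · exact le_of_isBVertex_of_isLeft_eq hc.1 h (by omega) hb₀ hb₂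
  · exact le_of_isBVertex_of_isLeft_eq hc.1 h (by omega) hb₁ hb₂

lemma isBColoring_crown_side (hn : 2 ≤ n) :
    IsBColoring (crown n) 2 (Sum.elim (fun _ => 0) fun _ => 1) := by
  have h0 : 0 < n := by omega
  refine ⟨⟨?_, ?_, ?_⟩, ?_⟩
  · rintro (i | i) <;> simp
  · rintro (i | i) (j | j) h <;> simp_all
  · intro i hi
    interval_cases i
    exacts [⟨inl ⟨0, h0⟩, rfl⟩, ⟨inr ⟨0, h0⟩, rfl⟩]
  · intro i hi
    interval_cases i
    · refine ⟨inl ⟨0, h0⟩, rfl, fun j hj hne => ⟨inr ⟨1, hn⟩, by simp [Fin.ext_iff], ?_⟩⟩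
      simp only [elim_inl, elim_inr] at hne ⊢; omega
    · refine ⟨inr ⟨0, h0⟩, rfl, fun j hj hne => ⟨inl ⟨1, hn⟩, by simp [Fin.ext_iff], ?_⟩⟩
      simp only [elim_inl, elim_inr] at hne ⊢; omega

lemma isBColoring_crown_index :
    IsBColoring (crown n) n (Sum.elim Fin.val Fin.val) := by
  refine ⟨⟨?_, ?_, fun i hi => ⟨inl ⟨i, hi⟩, rfl⟩⟩, fun i hi => ⟨inl ⟨i, hi⟩, rfl, ?_⟩⟩
  · rintro (i | i) <;> exact i.isLt
  · rintro (i | i) (j | j) h <;> simp_all [Fin.val_inj]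
  · intro j hj hne
    exact ⟨inr ⟨j, hj⟩, by simpa [Fin.ext_iff] using hne.symm, rfl⟩

end Crown

/-- For `n ≥ 4`, the graph `K_{n,n}` minus a perfect matching has a b-coloring with `2`
colors and with `n` colors, but no b-coloring with `k` colors for any `2 < k < n`. -/
theorem crown_bSpectrum (n : ℕ) (hn : 4 ≤ n) :
    (∃ c, IsBColoring (crown n) 2 c) ∧ (∃ c, IsBColoring (crown n) n c) ∧
      ∀ k, 2 < k → k < n → ∀ c, ¬ IsBColoring (crown n) k c :=
  ⟨⟨_, isBColoring_crown_side (by omega)⟩, ⟨_, isBColoring_crown_index⟩,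
    fun _ hk hkn _ hc => absurd (le_of_isBColoring_crown hk hc) (by omega)⟩
end

section
/- If a graph G has girth at least 7 and contains a k-iris for some integer k ≥ 2χ(G), then G admits a b-coloring with k colors. -/
open SimpleGraph

variable {V : Type*}

/-- `u` is a `k`-iris: `u` has at least `k-1` neighbors, each of degree at least `k-1`. -/
def IsIris [Fintype V] (G : SimpleGraph V) [DecidableRel G.Adj] (k : ℕ) (u : V) : Prop :=
  ∃ S : Finset V, (∀ v ∈ S, G.Adj u v) ∧ k - 1 ≤ S.card ∧ ∀ v ∈ S, k - 1 ≤ G.degree v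


/-! Let `u` be the iris, `v i` (`i < k - 1`) neighbours of `u` of degree at least `k - 1`, and
`a i j` (`j < k - 2`) neighbours of `v i` other than `u`. Colour `u` with `0`, `v i` with `i + 1`
and the `a i j` with the colours other than `0` and `i + 1`: then `u` and every `v i` are
b-vertices. Girth at least 7 makes this depth-two tree induced and leaves every other vertex with
at most one neighbour in it, since two such neighbours would close a cycle of length at most 6.
So an optimal colouring with `χ` colours, shifted by `χ` at the vertices where it clashes with
that unique neighbour, extends the colouring of the tree properly to `G` with `2χ ≤ k`
colours. -/

theorem Finset.exists_injective_fin_of_le_card {α : Type*} {s : Finset α} {n : ℕ}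
    (h : n ≤ s.card) : ∃ f : Fin n → α, Function.Injective f ∧ ∀ i, f i ∈ s := by
  obtain ⟨e⟩ := Function.Embedding.nonempty_of_card_le (α := Fin n) (β := s) (by simpa)
  exact ⟨fun i => e i, Subtype.val_injective.comp e.injective, fun i => (e i).2⟩

namespace SimpleGraph

variable {G : SimpleGraph V}

theorem Walk.IsPath.egirth_le_length_add_two {a b w : V} {q : G.Walk a b} (hq : q.IsPath)
    (hab : a ≠ b) (hw : w ∉ q.support) (ha : G.Adj w a) (hb : G.Adj w b) :
    G.egirth ≤ q.length + 2 := by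
  have hcycle : (Walk.cons ha (q.concat hb.symm)).IsCycle := by
    refine (Walk.cons_isCycle_iff _ _).mpr ⟨hq.concat hw hb.symm, fun he => ?_⟩
    rw [Walk.edges_concat, List.concat_eq_append, List.mem_append, List.mem_singleton] at he
    rcases he with he | he
    · exact hw (q.fst_mem_support_of_mem_edges he)
    · rcases Sym2.eq_iff.mp he with ⟨rfl, rfl⟩ | ⟨-, rfl⟩
      exacts [ha.ne rfl, hab rfl]
  have := egirth_le_length hcycle
  simp only [Walk.length_cons, Walk.length_concat] at this
  exact_mod_cast this

theorem not_adj_of_adj_of_adj (hg : 4 ≤ G.egirth) {x y z : V} (hxy : G.Adj x y)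
    (hxz : G.Adj x z) : ¬ G.Adj y z := fun hyz => by
  have hq : (Walk.cons hxy Walk.nil).IsPath := by simp [hxy.ne]
  have := hq.egirth_le_length_add_two hxy.ne (by simp [hxz.ne', hyz.ne']) hxz.symm hyz.symm
  exact absurd (hg.trans this) (by norm_num)

def IsWithinRadius (G : SimpleGraph V) (u : V) (r : ℕ) (R : Set V) : Prop :=
  ∀ x ∈ R, ∃ p : G.Walk u x, p.length ≤ r ∧ ∀ y ∈ p.support, y ∈ R

theorem IsWithinRadius.eq_of_adj_of_adj {u w a b : V} {r : ℕ} {R : Set V}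
    (hR : G.IsWithinRadius u r R) (hg : 2 * r + 3 ≤ G.egirth) (hw : w ∉ R)
    (ha : a ∈ R) (hb : b ∈ R) (hwa : G.Adj w a) (hwb : G.Adj w b) : a = b := by
  classical
  by_contra hab
  obtain ⟨p, hp, hpR⟩ := hR a ha
  obtain ⟨q, hq, hqR⟩ := hR b hb
  have hpath := (p.reverse.append q).bypass_isPath
  have hsupport := (p.reverse.append q).support_bypass_subset_support
  have hlength := (p.reverse.append q).length_bypass_le_length
  generalize (p.reverse.append q).bypass = path at hpath hsupport hlength
  rw [Walk.support_append, Walk.support_reverse] at hsupport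
  rw [Walk.length_append, Walk.length_reverse] at hlength
  have hw_path : w ∉ path.support := fun h => by
    rcases List.mem_append.mp (hsupport h) with h | h
    · exact hw (hpR w (List.mem_reverse.mp h))
    · exact hw (hqR w (List.mem_of_mem_tail h))
  have := hg.trans (hpath.egirth_le_length_add_two hab hw_path hwa hwb)
  norm_cast at this
  omega

theorem Colorable.exists_coloring_eqOn {m k : ℕ} (hm : G.Colorable m) (hmk : 2 * m ≤ k)
    {P : Set V} (hP : ∀ w ∉ P, ∀ x ∈ P, ∀ y ∈ P, G.Adj w x → G.Adj w y → x = y)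
    (f : V → Fin k) (hf : ∀ x ∈ P, ∀ y ∈ P, G.Adj x y → f x ≠ f y) :
    ∃ c : G.Coloring (Fin k), Set.EqOn c f P := by
  classical
  obtain ⟨C⟩ := hm
  -- Outside `P` use `C`, shifted by `m` where it clashes with the unique neighbour in `P`;
  -- modulo `m` the colour is still that of `C`.
  let clash (x : V) : Prop := ∃ p ∈ P, G.Adj x p ∧ (f p : ℕ) = C x
  let c (x : V) : Fin k :=
    if x ∈ P then f x
    else if clash x then ⟨C x + m, by omega⟩ else ⟨C x, by omega⟩
  have hc_mod : ∀ x ∉ P, (c x : ℕ) % m = C x := fun x hx => by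
    by_cases h : clash x <;> simp [c, hx, h, Nat.mod_eq_of_lt (C x).isLt]
  have hc_mixed : ∀ x ∈ P, ∀ y ∉ P, G.Adj y x → f x ≠ c y := by
    intro x hx y hy hyx hxy
    by_cases h : clash y
    · have hcy : (c y : ℕ) = C y + m := by simp [c, hy, h]
      obtain ⟨p, hp, hyp, hpy⟩ := h
      obtain rfl := hP y hy p hp x hx hyp hyx
      rw [hxy, hcy] at hpy
      omega
    · exact h ⟨x, hx, hyx, by simp [hxy, c, hy, h]⟩
  refine ⟨Coloring.mk c fun {x y} hxy hcxy => ?_, fun x hx => if_pos hx⟩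
  by_cases hx : x ∈ P <;> by_cases hy : y ∈ P
  · exact hf x hx y hy hxy (by simpa [c, hx, hy] using hcxy)
  · exact hc_mixed x hx y hy hxy.symm (by simpa [c, hx] using hcxy)
  · exact hc_mixed y hy x hx hxy (by simpa [c, hy] using hcxy.symm)
  · exact C.valid hxy (Fin.ext (by rw [← hc_mod x hx, ← hc_mod y hy, hcxy]))

theorem Coloring.isBColoring_of_exists_bVertex {k : ℕ} (c : G.Coloring (Fin k))
    (h : ∀ t, ∃ x, c x = t ∧ ∀ s ≠ t, ∃ w, G.Adj x w ∧ c w = s) :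
    IsBColoring G k (fun x => c x) := by
  refine ⟨⟨fun x => (c x).isLt, fun x y hxy he => c.valid hxy (Fin.ext he), fun t ht => ?_⟩,
    fun t ht => ?_⟩
  · obtain ⟨x, hx, -⟩ := h ⟨t, ht⟩
    exact ⟨x, by simp [hx]⟩
  · obtain ⟨x, hx, hb⟩ := h ⟨t, ht⟩
    refine ⟨x, by simp [hx], fun s hs hst => ?_⟩
    obtain ⟨w, hxw, hw⟩ := hb ⟨s, hs⟩ (fun he => hst (by simp [← he, hx]))
    exact ⟨w, hxw, by simp [hw]⟩

theorem exists_colorable_of_two_mul_chromaticNumber_le [Nonempty V] {k : ℕ}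
    (hk : 2 * G.chromaticNumber ≤ k) : ∃ m, 0 < m ∧ G.Colorable m ∧ 2 * m ≤ k := by
  obtain ⟨m, hm⟩ : ∃ m : ℕ, (m : ℕ∞) = G.chromaticNumber :=
    ENat.ne_top_iff_exists.mp fun h => by simp [h] at hk
  have hcol : G.Colorable m := chromaticNumber_le_iff_colorable.mp hm.ge
  refine ⟨m, Nat.pos_of_ne_zero fun h0 => ?_, hcol, by rw [← hm] at hk; exact_mod_cast hk⟩
  obtain ⟨x⟩ := ‹Nonempty V›
  exact (h0 ▸ hcol.some x).elim0

section Tree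

variable {ι κ : Type*}

/-- `none` is the root `u`, `some (i, none)` its child `v i`, and `some (i, some j)` the
child `a i j` of `v i`. -/
def treeVertex (u : V) (v : ι → V) (a : ι → κ → V) : Option (ι × Option κ) → V
  | none => u
  | some (i, none) => v i
  | some (i, some j) => a i j

variable {u : V} {v : ι → V} {a : ι → κ → V}

theorem isWithinRadius_range_treeVertex_diff (huv : ∀ i, G.Adj u (v i))
    (hva : ∀ i j, G.Adj (v i) (a i j)) {w : V} (hwu : w ≠ u) (hwv : ∀ i, v i ≠ w) :
    G.IsWithinRadius u 2 (Set.range (treeVertex u v a) \ {w}) := by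
  have hu : u ∈ Set.range (treeVertex u v a) \ {w} := ⟨⟨none, rfl⟩, hwu.symm⟩
  have hv (i : ι) : v i ∈ Set.range (treeVertex u v a) \ {w} :=
    ⟨⟨some (i, none), rfl⟩, hwv i⟩
  rintro x ⟨⟨_ | ⟨i, _ | j⟩, hpx⟩, hx⟩ <;> dsimp only [treeVertex] at hpx <;> subst hpx
  · refine ⟨Walk.nil, by simp, fun y hy => ?_⟩
    simp only [Walk.support_nil, List.mem_cons, List.not_mem_nil, or_false] at hy
    exact hy ▸ hu
  · refine ⟨Walk.cons (huv i) Walk.nil, by simp, fun y hy => ?_⟩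
    simp only [Walk.support_cons, Walk.support_nil, List.mem_cons, List.not_mem_nil,
      or_false] at hy
    rcases hy with rfl | rfl
    exacts [hu, hv i]
  · refine ⟨Walk.cons (huv i) (Walk.cons (hva i j) Walk.nil), by simp, fun y hy => ?_⟩
    simp only [Walk.support_cons, Walk.support_nil, List.mem_cons, List.not_mem_nil,
      or_false] at hy
    rcases hy with rfl | rfl | rfl
    exacts [hu, hv i, ⟨⟨some (i, some j), rfl⟩, hx⟩]

theorem eq_of_adj_of_adj_of_mem_range_treeVertex (hg : 7 ≤ G.egirth)
    (huv : ∀ i, G.Adj u (v i)) (hva : ∀ i j, G.Adj (v i) (a i j)) {w x y : V} (hwu : w ≠ u)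
    (hwv : ∀ i, v i ≠ w) (hx : x ∈ Set.range (treeVertex u v a))
    (hy : y ∈ Set.range (treeVertex u v a)) (hwx : G.Adj w x) (hwy : G.Adj w y) : x = y :=
  (isWithinRadius_range_treeVertex_diff huv hva hwu hwv).eq_of_adj_of_adj (by norm_num [hg])
    (fun h => h.2 rfl) ⟨hx, hwx.ne'⟩ ⟨hy, hwy.ne'⟩ hwx hwy

theorem child_ne_grandchild (hg : 4 ≤ G.egirth) (huv : ∀ i, G.Adj u (v i))
    (hva : ∀ i j, G.Adj (v i) (a i j)) (i i' : ι) (j : κ) : v i' ≠ a i j := fun h =>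
  not_adj_of_adj_of_adj hg (huv i) (huv i') (h ▸ hva i j)

theorem eq_parent_of_adj_grandchild (hg : 7 ≤ G.egirth) (huv : ∀ i, G.Adj u (v i))
    (hva : ∀ i j, G.Adj (v i) (a i j)) (hau : ∀ i j, a i j ≠ u) {i : ι} {j : κ} {y : V}
    (hy : y ∈ Set.range (treeVertex u v a)) (h : G.Adj (a i j) y) : y = v i :=
  eq_of_adj_of_adj_of_mem_range_treeVertex hg huv hva (hau i j)
    (fun i' => child_ne_grandchild (hg.trans' (by norm_num)) huv hva i i' j) hy
    ⟨some (i, none), rfl⟩ h (hva i j).symm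

theorem treeVertex_injective (hg : 7 ≤ G.egirth) (huv : ∀ i, G.Adj u (v i))
    (hva : ∀ i j, G.Adj (v i) (a i j)) (hau : ∀ i j, a i j ≠ u) (hv : Function.Injective v)
    (ha : ∀ i, Function.Injective (a i)) : Function.Injective (treeVertex u v a) := by
  have hva_ne := child_ne_grandchild (hg.trans' (by norm_num)) huv hva
  rintro (_ | ⟨i, _ | j⟩) (_ | ⟨i', _ | j'⟩) h <;> simp only [treeVertex] at h
  · rfl
  · exact absurd h (huv i').ne
  · exact absurd h.symm (hau i' j')
  · exact absurd h.symm (huv i).ne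
  · rw [hv h]
  · exact absurd h (hva_ne i' i j')
  · exact absurd h (hau i j)
  · exact absurd h.symm (hva_ne i i' j)
  · obtain rfl : i' = i := hv <| eq_parent_of_adj_grandchild hg huv hva hau
      ⟨some (i', none), rfl⟩ (h ▸ (hva i' j').symm)
    rw [ha i' h]

/-- The children of child `i` receive every nonzero colour other than `i + 1`, so the root and
its children are b-vertices. -/
def treeColor {n : ℕ} : Option (Fin (n + 1) × Option (Fin n)) → Fin (n + 2)
  | none => 0
  | some (i, none) => i.succ
  | some (i, some j) => (i.succAbove j).succ

variable {n : ℕ} {v : Fin (n + 1) → V} {a : Fin (n + 1) → Fin n → V}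

theorem treeColor_ne_of_adj (hg : 7 ≤ G.egirth) (huv : ∀ i, G.Adj u (v i))
    (hva : ∀ i j, G.Adj (v i) (a i j)) (hau : ∀ i j, a i j ≠ u) (hv : Function.Injective v)
    {x y : Option (Fin (n + 1) × Option (Fin n))}
    (h : G.Adj (treeVertex u v a x) (treeVertex u v a y)) : treeColor x ≠ treeColor y := by
  have hchild {i i' : Fin (n + 1)} {j : Fin n} (h : G.Adj (a i' j) (v i)) :
      i.succ ≠ (i'.succAbove j).succ := by
    obtain rfl := hv (eq_parent_of_adj_grandchild hg huv hva hau ⟨some (i, none), rfl⟩ h)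
    exact fun he => Fin.succAbove_ne i j (Fin.succ_injective _ he).symm
  have hgrandchild {i i' : Fin (n + 1)} {j j' : Fin n} (h : G.Adj (a i j) (a i' j')) : False :=
    child_ne_grandchild (hg.trans' (by norm_num)) huv hva i' i j'
      (eq_parent_of_adj_grandchild hg huv hva hau ⟨some (i', some j'), rfl⟩ h).symm
  rcases x with _ | ⟨i, _ | j⟩ <;> rcases y with _ | ⟨i', _ | j'⟩ <;>
    simp only [treeVertex] at h <;> simp only [treeColor]
  · exact absurd h (G.loopless.irrefl u)
  · exact (Fin.succ_ne_zero _).symm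
  · exact (Fin.succ_ne_zero _).symm
  · exact Fin.succ_ne_zero _
  · exact absurd h (not_adj_of_adj_of_adj (hg.trans' (by norm_num)) (huv i) (huv i'))
  · exact hchild h.symm
  · exact Fin.succ_ne_zero _
  · exact (hchild h).symm
  · exact (hgrandchild h).elim

theorem exists_bVertex_of_eq_treeColor (huv : ∀ i, G.Adj u (v i))
    (hva : ∀ i j, G.Adj (v i) (a i j)) (c : V → Fin (n + 2))
    (hc : ∀ x, c (treeVertex u v a x) = treeColor x) (t : Fin (n + 2)) :
    ∃ x, c x = t ∧ ∀ s ≠ t, ∃ w, G.Adj x w ∧ c w = s := by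
  rcases Fin.eq_zero_or_eq_succ t with rfl | ⟨i, rfl⟩
  · refine ⟨u, hc none, fun s hs => ?_⟩
    obtain ⟨i, rfl⟩ := Fin.exists_succ_eq.mpr hs
    exact ⟨v i, huv i, hc (some (i, none))⟩
  · refine ⟨v i, hc (some (i, none)), fun s hs => ?_⟩
    rcases Fin.eq_zero_or_eq_succ s with rfl | ⟨i', rfl⟩
    · exact ⟨u, (huv i).symm, hc none⟩
    · obtain ⟨j, rfl⟩ := Fin.exists_succAbove_eq (fun h => hs (congrArg Fin.succ h))
      exact ⟨a i j, hva i j, hc (some (i, some j))⟩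

theorem exists_isBColoring_of_tree {m : ℕ} (hg : 7 ≤ G.egirth) (hm : G.Colorable m)
    (hmn : 2 * m ≤ n + 2) (huv : ∀ i, G.Adj u (v i)) (hva : ∀ i j, G.Adj (v i) (a i j))
    (hau : ∀ i j, a i j ≠ u) (hv : Function.Injective v) (ha : ∀ i, Function.Injective (a i)) :
    ∃ c, IsBColoring G (n + 2) c := by
  let f := Function.extend (treeVertex u v a) treeColor (fun _ => 0)
  have hf : ∀ x, f (treeVertex u v a x) = treeColor x :=
    (treeVertex_injective hg huv hva hau hv ha).extend_apply _ _
  obtain ⟨c, hc⟩ := hm.exists_coloring_eqOn hmn (P := Set.range (treeVertex u v a))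
    (fun w hw x hx y hy => eq_of_adj_of_adj_of_mem_range_treeVertex hg huv hva
      (fun h => hw ⟨none, h.symm⟩) (fun i h => hw ⟨some (i, none), h⟩) hx hy) f
    (by
      rintro _ ⟨x, rfl⟩ _ ⟨y, rfl⟩ h
      rw [hf, hf]
      exact treeColor_ne_of_adj hg huv hva hau hv h)
  refine ⟨_, c.isBColoring_of_exists_bVertex <|
    exists_bVertex_of_eq_treeColor huv hva c fun x => ?_⟩
  rw [hc ⟨x, rfl⟩, hf]

end Tree

end SimpleGraph

/-- If `G` has girth at least 7 and a `k`-iris with `k ≥ 2χ(G)`, then `G` has a b-coloring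
with `k` colors. -/
theorem bColoring_of_iris [Fintype V] (G : SimpleGraph V) [DecidableRel G.Adj]
    (hg : (7 : ℕ∞) ≤ G.egirth) (k : ℕ) (u : V) (hu : IsIris G k u)
    (hk : 2 * G.chromaticNumber ≤ (k : ℕ∞)) :
    ∃ c : V → ℕ, IsBColoring G k c := by
  classical
  have : Nonempty V := ⟨u⟩
  obtain ⟨m, hm0, hm, hmk⟩ := exists_colorable_of_two_mul_chromaticNumber_le hk
  obtain ⟨n, rfl⟩ : ∃ n, k = n + 2 := ⟨k - 2, by omega⟩
  obtain ⟨S, hSu, hScard, hSdeg⟩ := hu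
  obtain ⟨v, hv, hvS⟩ :=
    Finset.exists_injective_fin_of_le_card (s := S) (n := n + 1) (by omega)
  have hsecond (i : Fin (n + 1)) : n ≤ ((G.neighborFinset (v i)).erase u).card := by
    rw [Finset.card_erase_of_mem ((G.mem_neighborFinset _ _).mpr (hSu _ (hvS i)).symm),
      card_neighborFinset_eq_degree]
    have := hSdeg _ (hvS i)
    omega
  choose a ha haN using fun i => Finset.exists_injective_fin_of_le_card (hsecond i)
  exact exists_isBColoring_of_tree hg hm hmk (fun i => hSu _ (hvS i))
    (fun i j => (G.mem_neighborFinset _ _).mp (Finset.mem_of_mem_erase (haN i j)))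
    (fun i j => Finset.ne_of_mem_erase (haN i j)) hv ha
end

section
/- For every graph G, the partial Grundy number ∂Γ(G) is at most the stair factor s(G). -/
open SimpleGraph

variable {V : Type*}

/-- A partial Grundy coloring of `G` with `k` colors: a proper coloring using exactly the
colors `0, …, k-1` such that every color class `i` contains a Grundy vertex, i.e. a vertex
having a neighbor of every color `j < i`. -/
def IsPartialGrundy (G : SimpleGraph V) (k : ℕ) (c : V → ℕ) : Prop :=
  (∀ v, c v < k) ∧ (∀ u v, G.Adj u v → c u ≠ c v) ∧
    ∀ i < k, ∃ u, c u = i ∧ ∀ j < i, ∃ w, G.Adj u w ∧ c w = j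

/-- `(w 0, …, w (s-1))` is a feasible sequence: the vertices are distinct and `w i` has
degree at least `i` in the graph obtained from `G` by deleting `w (i+1), …, w (s-1)`.
(With 1-based indexing as in the paper this is degree at least `i - 1`.) -/
def IsFeasibleSeq (G : SimpleGraph V) {s : ℕ} (w : Fin s → V) : Prop :=
  Function.Injective w ∧
    ∀ i : Fin s, (i : ℕ) ≤ (G.neighborSet (w i) \ {v | ∃ j : Fin s, i < j ∧ w j = v}).ncard

/-- The partial Grundy number `∂Γ(G)`. -/
noncomputable def partialGrundy [Fintype V] (G : SimpleGraph V) : ℕ :=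
  sSup {k | ∃ c : V → ℕ, IsPartialGrundy G k c}

/-- The stair factor `s(G)`: the maximum length of a feasible sequence. -/
noncomputable def stairFactor [Fintype V] (G : SimpleGraph V) : ℕ :=
  sSup {s | ∃ w : Fin s → V, IsFeasibleSeq G w}

/-!
Listing one Grundy vertex of each color in increasing order of color gives a feasible
sequence: the Grundy vertex of color `i` has neighbors of the `i` colors below `i`, and none
of them is deleted, since the vertices listed after it have larger colors.
-/

variable {G : SimpleGraph V}

theorem SimpleGraph.le_ncard_neighborSet_color_lt [Finite V] {c : V → ℕ} {u : V} {i : ℕ}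
    (h : ∀ j < i, ∃ w, G.Adj u w ∧ c w = j) :
    i ≤ {v ∈ G.neighborSet u | c v < i}.ncard :=
  calc i = (Set.Iio i).ncard := (Set.ncard_Iio_nat i).symm
    _ ≤ (c '' {v ∈ G.neighborSet u | c v < i}).ncard := by
      refine Set.ncard_le_ncard (fun j hj => ?_) (Set.toFinite _)
      obtain ⟨w, hadj, rfl⟩ := h j hj
      exact ⟨w, ⟨hadj, hj⟩, rfl⟩
    _ ≤ _ := Set.ncard_image_le

theorem IsPartialGrundy.exists_isFeasibleSeq [Finite V] {k : ℕ} {c : V → ℕ}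
    (hc : IsPartialGrundy G k c) : ∃ w : Fin k → V, IsFeasibleSeq G w := by
  choose u hu hnb using fun i : Fin k => hc.2.2 i i.isLt
  refine ⟨u, fun i j hij => Fin.ext (by rw [← hu i, ← hu j, hij]), fun i => ?_⟩
  refine (le_ncard_neighborSet_color_lt (hnb i)).trans (Set.ncard_le_ncard ?_ (Set.toFinite _))
  rintro v ⟨hadj, hlt⟩
  refine ⟨hadj, ?_⟩
  rintro ⟨j, hij, rfl⟩
  rw [hu j] at hlt
  exact hij.not_gt hlt

theorem IsFeasibleSeq.length_le_card [Fintype V] {s : ℕ} {w : Fin s → V}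
    (hw : IsFeasibleSeq G w) : s ≤ Fintype.card V := by
  simpa using Fintype.card_le_of_injective w hw.1

/-- For every graph `G`, the partial Grundy number is at most the stair factor. -/
theorem partialGrundy_le_stairFactor [Fintype V] (G : SimpleGraph V) :
    partialGrundy G ≤ stairFactor G :=
  csSup_le_csSup' ⟨Fintype.card V, fun _ ⟨_, hw⟩ => hw.length_le_card⟩
    fun _ ⟨_, hc⟩ => hc.exists_isFeasibleSeq
end

section
/- For every n ≥ 1, the stair factor of the complete bipartite graph K_{n,n} equals n+1. -/
/-!
In `K_{n,n}` every vertex has degree `n`, and the last vertex of a feasible sequence of length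
`s` needs degree at least `s - 1`, so `s ≤ n + 1`. Conversely, one vertex of the left side
followed by the whole right side is feasible: the right side is independent, so deleting later
vertices never removes a neighbour of an earlier right vertex, which keeps all `n` of them.
-/

open SimpleGraph

variable {V : Type*}

namespace IsFeasibleSeq

variable {G : SimpleGraph V} {s d : ℕ}

theorem length_le {w : Fin s → V} (hw : IsFeasibleSeq G w)
    (hd : ∀ v, (G.neighborSet v).ncard ≤ d) : s ≤ d + 1 := by
  obtain _ | m := s
  · omega
  have hlast := hw.2 (Fin.last m)
  have hnone : {v | ∃ j : Fin (m + 1), Fin.last m < j ∧ w j = v} = ∅ :=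
    Set.eq_empty_iff_forall_notMem.2 fun _ ⟨j, hj, _⟩ ↦ (Fin.le_last j).not_gt hj
  rw [hnone, Set.sdiff_empty] at hlast
  simpa using hlast.trans (hd _)

theorem cons {v : V} {u : Fin s → V}
    (hv : v ∉ Set.range u) (hu : Function.Injective u) (hind : G.IsIndepSet (Set.range u))
    (hdeg : ∀ i : Fin s, (i : ℕ) + 1 ≤ (G.neighborSet (u i)).ncard) :
    IsFeasibleSeq G (Fin.cons v u : Fin (s + 1) → V) := by
  refine ⟨Fin.cons_injective_iff.2 ⟨hv, hu⟩, Fin.cases (by simp) fun i ↦ ?_⟩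
  have hlater : Disjoint (G.neighborSet (u i))
      {x | ∃ j : Fin (s + 1), i.succ < j ∧ (Fin.cons v u : Fin (s + 1) → V) j = x} := by
    rw [Set.disjoint_left]
    rintro _ hadj ⟨j, hij, rfl⟩
    obtain ⟨j, rfl⟩ := Fin.exists_succ_eq.2 (Fin.ne_zero_of_lt hij)
    rw [Fin.cons_succ] at hadj
    exact hind (Set.mem_range_self i) (Set.mem_range_self j)
      (hu.ne (ne_of_lt (Fin.succ_lt_succ_iff.1 hij))) hadj
  simpa [sdiff_eq_self_iff_disjoint.2 hlater.symm] using hdeg i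

end IsFeasibleSeq

namespace SimpleGraph.completeBipartiteGraph

variable {α β : Type*}

theorem neighborSet_inl (a : α) :
    (completeBipartiteGraph α β).neighborSet (.inl a) = Set.range .inr := by
  ext (_ | _) <;> simp

theorem neighborSet_inr (b : β) :
    (completeBipartiteGraph α β).neighborSet (.inr b) = Set.range .inl := by
  ext (_ | _) <;> simp

theorem isIndepSet_range_inr : (completeBipartiteGraph α β).IsIndepSet (Set.range .inr) := by
  rintro _ ⟨_, rfl⟩ _ ⟨_, rfl⟩ _
  simp

theorem ncard_neighborSet (n : ℕ) (v : Fin n ⊕ Fin n) :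
    ((completeBipartiteGraph (Fin n) (Fin n)).neighborSet v).ncard = n := by
  obtain a | b := v
  · rw [neighborSet_inl, Set.ncard_range_of_injective Sum.inr_injective, Nat.card_fin]
  · rw [neighborSet_inr, Set.ncard_range_of_injective Sum.inl_injective, Nat.card_fin]

end SimpleGraph.completeBipartiteGraph

/-- For `n ≥ 1`, the stair factor of `K_{n,n}` is `n + 1`. -/
theorem stairFactor_completeBipartite (n : ℕ) (hn : 1 ≤ n) :
    stairFactor (completeBipartiteGraph (Fin n) (Fin n)) = n + 1 := by
  refine IsGreatest.csSup_eq ⟨⟨Fin.cons (.inl ⟨0, hn⟩) .inr, ?_⟩, ?_⟩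
  · refine IsFeasibleSeq.cons (by simp) Sum.inr_injective
      completeBipartiteGraph.isIndepSet_range_inr fun i ↦ ?_
    rw [completeBipartiteGraph.ncard_neighborSet]
    exact i.isLt
  · rintro s ⟨w, hw⟩
    exact hw.length_le fun v ↦ (completeBipartiteGraph.ncard_neighborSet n v).le
end

section
/- For every n ≥ 2, every partial Grundy coloring of the complete bipartite graph K_{n,n} uses exactly 2 colors; in particular ∂Γ(K_{n,n}) = 2 < s(K_{n,n}) = n+1. -/
/-!
In a proper colouring of a complete bipartite graph every colour class lies on one side, since
vertices on opposite sides are adjacent. A Grundy vertex of colour 2 has neighbours of colours 0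
and 1, which puts these two colours on the same side, whereas a Grundy vertex of colour 1 has a
neighbour of colour 0 and so puts them on opposite sides. Hence at most two colours occur, and the
colouring by sides uses two.

The last vertex of a feasible sequence of length `s` has degree at least `s - 1`, so `s ≤ Δ + 1`;
in `K_{n,n}` the sequence listing one side and then a single vertex of the other side attains
`n + 1`, each vertex of the first side keeping all but one of its `n` neighbours.
-/

open SimpleGraph

variable {V : Type*}

section CompleteBipartite

variable {α β : Type*}

lemma completeBipartiteGraph_adj_iff_isLeft_ne {u v : α ⊕ β} :
    (completeBipartiteGraph α β).Adj u v ↔ u.isLeft ≠ v.isLeft := by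
  rcases u with a | b <;> rcases v with a' | b' <;> simp

lemma neighborSet_completeBipartiteGraph_inl (a : α) :
    (completeBipartiteGraph α β).neighborSet (.inl a) = Set.range .inr := by
  ext (a' | b) <;> simp

lemma neighborSet_completeBipartiteGraph_inr (b : β) :
    (completeBipartiteGraph α β).neighborSet (.inr b) = Set.range .inl := by
  ext (a | b') <;> simp

end CompleteBipartite

section PartialGrundy

variable {V α β : Type*} {G : SimpleGraph V} {k : ℕ}

lemma IsPartialGrundy.two_le_of_adj {c : V → ℕ} (h : IsPartialGrundy G k c) {u v : V}
    (huv : G.Adj u v) : 2 ≤ k := by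
  have := h.1 u
  have := h.1 v
  have := h.2.1 u v huv
  omega

lemma IsPartialGrundy.isLeft_eq_of_eq {c : α ⊕ β → ℕ}
    (h : IsPartialGrundy (completeBipartiteGraph α β) k c) {u v : α ⊕ β} (huv : c u = c v) :
    u.isLeft = v.isLeft := by
  by_contra hne
  exact h.2.1 u v (completeBipartiteGraph_adj_iff_isLeft_ne.2 hne) huv

lemma IsPartialGrundy.le_two_of_completeBipartiteGraph {c : α ⊕ β → ℕ}
    (h : IsPartialGrundy (completeBipartiteGraph α β) k c) : k ≤ 2 := by
  by_contra! hk
  obtain ⟨u, -, hu⟩ := h.2.2 2 hk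
  obtain ⟨w₀, huw₀, hw₀⟩ := hu 0 two_pos
  obtain ⟨w₁, huw₁, hw₁⟩ := hu 1 one_lt_two
  obtain ⟨u', hu', hu'₀⟩ := h.2.2 1 (by omega)
  obtain ⟨z, hu'z, hz⟩ := hu'₀ 0 one_pos
  rw [completeBipartiteGraph_adj_iff_isLeft_ne] at huw₀ huw₁ hu'z
  rw [h.isLeft_eq_of_eq (hu'.trans hw₁.symm), h.isLeft_eq_of_eq (hz.trans hw₀.symm)] at hu'z
  revert huw₀ huw₁ hu'z
  cases u.isLeft <;> cases w₀.isLeft <;> cases w₁.isLeft <;> decide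

lemma isPartialGrundy_completeBipartiteGraph_two [Nonempty α] [Nonempty β] :
    IsPartialGrundy (completeBipartiteGraph α β) 2 (Sum.elim (fun _ ↦ 0) fun _ ↦ 1) := by
  inhabit α
  inhabit β
  refine ⟨by rintro (a | b) <;> simp, by rintro (a | b) (a' | b') <;> simp, fun i hi ↦ ?_⟩
  interval_cases i
  · exact ⟨.inl default, rfl, by omega⟩
  · refine ⟨.inr default, rfl, fun j hj ↦ ⟨.inl default, by simp, ?_⟩⟩
    simp only [Sum.elim_inl]
    omega

end PartialGrundy

section FeasibleSeq

variable {V α : Type*} {G : SimpleGraph V} {s d : ℕ}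

lemma IsFeasibleSeq.length_le_s12 [Finite V] {w : Fin s → V} (h : IsFeasibleSeq G w)
    (hd : ∀ v, (G.neighborSet v).ncard ≤ d) : s ≤ d + 1 := by
  cases s with
  | zero => omega
  | succ s =>
    suffices s ≤ d by omega
    calc s = (Fin.last s : ℕ) := rfl
      _ ≤ _ := h.2 (Fin.last s)
      _ ≤ (G.neighborSet (w (Fin.last s))).ncard := Set.ncard_le_ncard Set.sdiff_subset
      _ ≤ d := hd _

lemma exists_isFeasibleSeq_completeBipartiteGraph [Finite α] (a : α) {m : ℕ}
    (hm : m ≤ Nat.card α) :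
    ∃ w : Fin (m + 1) → α ⊕ Fin m, IsFeasibleSeq (completeBipartiteGraph α (Fin m)) w := by
  set w : Fin (m + 1) → α ⊕ Fin m := Fin.snoc Sum.inr (Sum.inl a)
  refine ⟨w, Fin.snoc_injective_iff.2 ⟨Sum.inr_injective, by simp⟩, fun i ↦ ?_⟩
  induction i using Fin.lastCases with
  | last =>
    have hsub : Set.range Sum.inr ⊆
        (completeBipartiteGraph α (Fin m)).neighborSet (w (.last m)) \
          {v | ∃ j, Fin.last m < j ∧ w j = v} := by
      rintro _ ⟨b, rfl⟩
      simpa [w, neighborSet_completeBipartiteGraph_inl] using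
        fun j hj ↦ absurd hj (Fin.le_last j).not_gt
    calc m = (Set.range (Sum.inr : Fin m → α ⊕ Fin m)).ncard := by
          simp [Set.ncard_range_of_injective Sum.inr_injective]
      _ ≤ _ := Set.ncard_le_ncard hsub
  | cast i =>
    have hsub : Set.range Sum.inl \ {Sum.inl a} ⊆
        (completeBipartiteGraph α (Fin m)).neighborSet (w i.castSucc) \
          {v | ∃ j, i.castSucc < j ∧ w j = v} := by
      rintro _ ⟨⟨a', rfl⟩, ha'⟩
      refine ⟨by simp [w, neighborSet_completeBipartiteGraph_inr], ?_⟩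
      rintro ⟨j, -, hj⟩
      induction j using Fin.lastCases with
      | last => simp_all [w]
      | cast j => simp [w] at hj
    calc (i.castSucc : ℕ) ≤ Nat.card α - 1 := by rw [Fin.val_castSucc]; omega
      _ = (Set.range (Sum.inl : α → α ⊕ Fin m)).ncard - 1 := by
          rw [Set.ncard_range_of_injective Sum.inl_injective]
      _ ≤ (Set.range Sum.inl \ {Sum.inl a}).ncard := Set.pred_ncard_le_ncard_sdiff_singleton _ _
      _ ≤ _ := Set.ncard_le_ncard hsub

end FeasibleSeq

/-- For `n ≥ 2`, every partial Grundy coloring of `K_{n,n}` uses exactly 2 colors;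
in particular `∂Γ(K_{n,n}) = 2 < s(K_{n,n}) = n + 1`. -/
theorem partialGrundy_completeBipartite (n : ℕ) (hn : 2 ≤ n) :
    (∀ (k : ℕ) (c : Fin n ⊕ Fin n → ℕ),
        IsPartialGrundy (completeBipartiteGraph (Fin n) (Fin n)) k c → k = 2) ∧
      partialGrundy (completeBipartiteGraph (Fin n) (Fin n)) = 2 ∧
      stairFactor (completeBipartiteGraph (Fin n) (Fin n)) = n + 1 ∧
      partialGrundy (completeBipartiteGraph (Fin n) (Fin n)) <
        stairFactor (completeBipartiteGraph (Fin n) (Fin n)) := by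
  have : NeZero n := ⟨by omega⟩
  have hcolors (k : ℕ) (c : Fin n ⊕ Fin n → ℕ)
      (h : IsPartialGrundy (completeBipartiteGraph (Fin n) (Fin n)) k c) : k = 2 :=
    h.le_two_of_completeBipartiteGraph.antisymm
      (h.two_le_of_adj (u := .inl 0) (v := .inr 0) (by simp))
  have hgrundy : partialGrundy (completeBipartiteGraph (Fin n) (Fin n)) = 2 :=
    IsGreatest.csSup_eq ⟨⟨_, isPartialGrundy_completeBipartiteGraph_two⟩,
      fun k ⟨c, hc⟩ ↦ (hcolors k c hc).le⟩
  have hdegree (v : Fin n ⊕ Fin n) :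
      ((completeBipartiteGraph (Fin n) (Fin n)).neighborSet v).ncard ≤ n := by
    rcases v with a | b <;>
      simp [neighborSet_completeBipartiteGraph_inl, neighborSet_completeBipartiteGraph_inr,
        Set.ncard_range_of_injective Sum.inl_injective,
        Set.ncard_range_of_injective Sum.inr_injective]
  have hstair : stairFactor (completeBipartiteGraph (Fin n) (Fin n)) = n + 1 :=
    IsGreatest.csSup_eq ⟨exists_isFeasibleSeq_completeBipartiteGraph 0 (by simp),
      fun s ⟨w, hw⟩ ↦ hw.length_le_s12 hdegree⟩
  exact ⟨hcolors, hgrundy, hstair, by omega⟩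
end

section
/- Let G be a graph with girth at least 7, let u be a vertex, and let u_2,...,u_k be distinct neighbors of u. If N_i ⊆ N(u_i) \ {u} with |N_i| = k-2 for each i, then the set T = {u} ∪ {u_2,...,u_k} ∪ N_2 ∪ ... ∪ N_k induces a tree of diameter at most 4 in G, and every vertex outside T has at most one neighbor in T. -/
/-!
Every vertex of `T` is joined to `u` inside `T` by a walk of length at most 2, so `T` induces a
connected graph of diameter at most 4 lying in the ball of radius 2 about `u`. In girth at least 6
that ball induces a forest: adjacent vertices of the ball are at different distances from `u`
(otherwise there is a 3- or 5-cycle) and each vertex has at most one neighbour closer to `u`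
(otherwise there is a 4-cycle), so a vertex of a cycle farthest from `u` cannot exist.
Finally, a vertex outside `T` with two neighbours in `T` closes the path of length at most 4
between them into a cycle of length at most 6.
-/

open SimpleGraph

variable {V : Type*}

theorem ENat.eq_zero_or_eq_one_or_eq_two_of_lt_three {n : ℕ∞} (h : n < 3) :
    n = 0 ∨ n = 1 ∨ n = 2 := by
  induction n using ENat.recTopCoe with
  | top => simp at h
  | coe n => norm_cast at h ⊢; omega

namespace SimpleGraph
open Walk

theorem isAcyclic_of_unique_lower_neighbor {W α : Type*} [LinearOrder α] {H : SimpleGraph W}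
    (f : W → α) (hne : ∀ ⦃a b⦄, H.Adj a b → f a ≠ f b)
    (huniq : ∀ ⦃a b c⦄, H.Adj a b → H.Adj a c → f b < f a → f c < f a → b = c) :
    H.IsAcyclic := by
  classical
  intro v c hc
  obtain ⟨x, hx, hmax⟩ := c.support.toFinset.exists_max_image f ⟨v, by simp⟩
  rw [List.mem_toFinset] at hx
  have hc' := hc.rotate hx
  have hnil : ¬ (c.rotate x hx).Nil := hc'.not_nil
  have hlower : ∀ y ∈ (c.rotate x hx).support, H.Adj x y → f y < f x := fun y hy hxy =>
    (hmax y (by simpa [mem_support_rotate_iff] using hy)).lt_of_ne (hne hxy).symm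
  exact hc'.snd_ne_penultimate <| huniq (adj_snd hnil) (adj_penultimate hnil).symm
    (hlower _ (getVert_mem_support _ _) (adj_snd hnil))
    (hlower _ (getVert_mem_support _ _) (adj_penultimate hnil).symm)

variable {G : SimpleGraph V}

theorem egirth_le_length_add_two {x y z : V} {p : G.Walk y z} (hp : p.IsPath)
    (hx : x ∉ p.support) (hxy : G.Adj x y) (hxz : G.Adj x z) (hyz : y ≠ z) :
    G.egirth ≤ p.length + 2 := by
  have hc : (cons hxy (p.concat hxz.symm)).IsCycle := by
    rw [cons_isCycle_iff, edges_concat, List.concat_eq_append, List.mem_append,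
      List.mem_singleton, not_or]
    refine ⟨hp.concat hx _, fun h => hx (p.fst_mem_support_of_mem_edges h), fun h => ?_⟩
    rw [Sym2.eq_iff] at h
    grind [hxy.ne]
  simpa [add_assoc] using egirth_le_length hc

theorem not_adj_of_adj_of_adj_s15 (hg : 4 ≤ G.egirth) {a b c : V} (hab : G.Adj a b)
    (hac : G.Adj a c) : ¬ G.Adj b c := fun hbc => by
  have hpath : (cons hbc nil).IsPath := by simp [hbc.ne]
  have := hg.trans (egirth_le_length_add_two hpath (by simp [hab.ne, hac.ne]) hab hac hbc.ne)
  norm_num at this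

theorem subsingleton_commonNeighbors (hg : 5 ≤ G.egirth) {a c : V} (hac : a ≠ c) :
    (G.commonNeighbors a c).Subsingleton := by
  intro b hb d hd
  rw [mem_commonNeighbors] at hb hd
  by_contra hbd
  have hpath : (cons hb.1.symm (cons hd.1 nil)).IsPath := by
    simp [hb.1.ne', hd.1.ne, hbd]
  have := hg.trans <| egirth_le_length_add_two hpath
    (by simp [hb.2.ne, hac.symm, hd.2.ne]) hb.2 hd.2 hbd
  norm_num at this

theorem Adj.edist_ne_of_edist_lt_three (hg : 6 ≤ G.egirth) {a b u : V} (hab : G.Adj a b)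
    (ha : G.edist a u < 3) : G.edist a u ≠ G.edist b u := by
  intro heq
  rcases ENat.eq_zero_or_eq_one_or_eq_two_of_lt_three ha with ha | ha | ha <;> have hb := heq ▸ ha
  · rw [edist_eq_zero_iff] at ha hb
    exact hab.ne (ha.trans hb.symm)
  · rw [edist_eq_one_iff_adj] at ha hb
    exact not_adj_of_adj_of_adj_s15 (hg.trans' (by norm_num)) ha.symm hb.symm hab
  · obtain ⟨hau, hnau, p, hp⟩ := edist_eq_two_iff.1 ha
    obtain ⟨hbu, hnbu, q, hq⟩ := edist_eq_two_iff.1 hb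
    rw [mem_commonNeighbors] at hp hq
    obtain ⟨hap, hup⟩ := hp
    obtain ⟨hbq, huq⟩ := hq
    by_cases hpq : p = q
    · subst hpq
      exact not_adj_of_adj_of_adj_s15 (hg.trans' (by norm_num)) hap.symm hbq.symm hab
    have hpb : p ≠ b := by rintro rfl; exact hnbu hup.symm
    have haq : a ≠ q := by rintro rfl; exact hnau huq.symm
    have hpath : (cons hup.symm (cons huq (cons hbq.symm nil))).IsPath := by
      simp [hup.ne', hpq, huq.ne, hbu.symm, hbq.ne', hpb]
    have := hg.trans <| egirth_le_length_add_two hpath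
      (by simp [hap.ne, hau, hab.ne, haq]) hap hab hpb
    norm_num at this

theorem eq_of_adj_of_edist_lt (hg : 5 ≤ G.egirth) {x b c u : V} (hx : G.edist x u < 3)
    (hxb : G.Adj x b) (hxc : G.Adj x c) (hb : G.edist b u < G.edist x u)
    (hc : G.edist c u < G.edist x u) : b = c := by
  rcases ENat.eq_zero_or_eq_one_or_eq_two_of_lt_three hx with h | h | h
  · simp [h] at hb
  · rw [h, Order.lt_one_iff, edist_eq_zero_iff] at hb hc
    rw [hb, hc]
  · rw [h, ENat.lt_two_iff, edist_le_one_iff_adj_or_eq] at hb hc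
    obtain ⟨hxu, hnxu, -⟩ := edist_eq_two_iff.1 h
    have hbu : G.Adj b u := hb.resolve_right (by rintro rfl; exact hnxu hxb)
    have hcu : G.Adj c u := hc.resolve_right (by rintro rfl; exact hnxu hxc)
    exact subsingleton_commonNeighbors hg hxu ⟨hxb, hbu.symm⟩ ⟨hxc, hcu.symm⟩

theorem isAcyclic_induce_ball_three (hg : 6 ≤ G.egirth) (u : V) :
    (G.induce (G.ball u 3)).IsAcyclic :=
  isAcyclic_of_unique_lower_neighbor (fun v => G.edist v u)
    (fun a _ hab => hab.edist_ne_of_edist_lt_three hg a.2)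
    (fun x _ _ hxb hxc hb hc =>
      Subtype.ext <| eq_of_adj_of_edist_lt (hg.trans' (by norm_num)) x.2 hxb hxc hb hc)

theorem ncard_adj_le_one_of_dist_le {T : Set V} {d : ℕ} (hg : d + 3 ≤ G.egirth)
    (hconn : (G.induce T).Connected) (hdist : ∀ a b : T, (G.induce T).dist a b ≤ d)
    {x : V} (hx : x ∉ T) : {y | y ∈ T ∧ G.Adj x y}.ncard ≤ 1 := by
  have hsub : {y | y ∈ T ∧ G.Adj x y}.Subsingleton := by
    rintro y ⟨hyT, hxy⟩ z ⟨hzT, hxz⟩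
    by_contra hyz
    obtain ⟨p, hp, hlen⟩ := hconn.exists_path_of_dist ⟨y, hyT⟩ ⟨z, hzT⟩
    have hxp : x ∉ (p.map (Embedding.induce T).toHom).support := by
      rw [Walk.support_map, List.mem_map]
      rintro ⟨v, -, rfl⟩
      exact hx v.2
    have := hg.trans <| egirth_le_length_add_two
      (hp.map (Embedding.induce (G := G) T).injective) hxp hxy hxz hyz
    rw [Walk.length_map, hlen] at this
    have hle := hdist ⟨y, hyT⟩ ⟨z, hzT⟩
    have : d + 3 ≤ (G.induce T).dist ⟨y, hyT⟩ ⟨z, hzT⟩ + 2 := by exact_mod_cast this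
    omega
  exact (Set.ncard_le_one hsub.finite).2 hsub

end SimpleGraph

theorem iris_neighborhood_structure_general (G : SimpleGraph V) (hg : (7 : ℕ∞) ≤ G.egirth)
    (u : V) (k : ℕ)
    (w : Fin (k - 1) → V) (hadj : ∀ i, G.Adj u (w i))
    (N : Fin (k - 1) → Finset V)
    (hN : ∀ i, ∀ x ∈ N i, G.Adj (w i) x ∧ x ≠ u)
    (T : Set V) (hT : T = {u} ∪ Set.range w ∪ ⋃ i, (N i : Set V)) :
    (G.induce T).IsTree ∧ (∀ a b : T, (G.induce T).dist a b ≤ 4) ∧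
      ∀ x, x ∉ T → ({y | y ∈ T ∧ G.Adj x y}).ncard ≤ 1 := by
  have hu : u ∈ T := by simp [hT]
  have hwT (i) : w i ∈ T := by simp [hT]
  have hwalk : ∀ a : T, ∃ p : (G.induce T).Walk ⟨u, hu⟩ a, p.length ≤ 2 := by
    rintro ⟨a, ha⟩
    rw [hT] at ha
    rcases ha with (rfl | ⟨i, rfl⟩) | ha
    · exact ⟨.nil, by simp⟩
    · exact ⟨.cons (induce_adj.2 (hadj i)) .nil, by simp⟩
    · obtain ⟨i, hi⟩ := Set.mem_iUnion.1 ha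
      exact ⟨.cons (v := ⟨w i, hwT i⟩) (induce_adj.2 (hadj i))
        (.cons (induce_adj.2 (hN i a hi).1) .nil), by simp⟩
  have hconn : (G.induce T).Connected := (connected_iff_exists_forall_reachable _).2
    ⟨⟨u, hu⟩, fun a => (hwalk a).elim fun p _ => p.reachable⟩
  have hdist (a b : T) : (G.induce T).dist a b ≤ 4 := by
    obtain ⟨p, hp⟩ := hwalk a
    obtain ⟨q, hq⟩ := hwalk b
    calc (G.induce T).dist a b ≤ (p.reverse.append q).length := dist_le _
      _ ≤ 4 := by rw [Walk.length_append, Walk.length_reverse]; omega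
  have hball : T ⊆ G.ball u 3 := fun a ha => by
    obtain ⟨p, hp⟩ := hwalk ⟨a, ha⟩
    calc G.edist a u ≤ (p.reverse.map (Embedding.induce T).toHom).length := edist_le _
      _ < 3 := by
        rw [Walk.length_map, Walk.length_reverse]
        exact_mod_cast hp.trans_lt (by norm_num)
  exact ⟨⟨hconn, (isAcyclic_induce_ball_three (hg.trans' (by norm_num)) u).embedding
    (G.induceHomOfLE hball)⟩, hdist, fun x => ncard_adj_le_one_of_dist_le hg hconn hdist⟩

/-- Around a vertex `u` with distinct neighbors `w 0, …, w (k-2)`, each `w i` having a set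
`N i` of `k - 2` further neighbors avoiding `u`, the set `T` of all these vertices induces a
tree of diameter at most 4 in a graph of girth at least 7, and every vertex outside `T` has
at most one neighbor in `T`. -/
theorem iris_neighborhood_structure (G : SimpleGraph V) (hg : (7 : ℕ∞) ≤ G.egirth)
    (u : V) (k : ℕ) (hk : 2 ≤ k)
    (w : Fin (k - 1) → V) (hwinj : Function.Injective w) (hadj : ∀ i, G.Adj u (w i))
    (N : Fin (k - 1) → Finset V)
    (hN : ∀ i, ∀ x ∈ N i, G.Adj (w i) x ∧ x ≠ u)
    (hcard : ∀ i, (N i).card = k - 2)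
    (T : Set V) (hT : T = {u} ∪ Set.range w ∪ ⋃ i, (N i : Set V)) :
    (G.induce T).IsTree ∧ (∀ a b : T, (G.induce T).dist a b ≤ 4) ∧
      ∀ x, x ∉ T → ({y | y ∈ T ∧ G.Adj x y}).ncard ≤ 1 :=
  iris_neighborhood_structure_general G hg u k w hadj N hN T hT
end
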